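/- arXiv:1104.0707 — 4 statements merged into one kernel-verified Lean document; each statement's English description precedes it below -/
import Mathlib

section
/- For every natural number n ≥ 1, the graph H_n satisfies P_{H_n}(5) ≥ 27^n, i.e., the number of proper 5-colorings of H_n is at least 27^n. -/
/-- The nine (0-indexed) block pairs `(i,j)`, `i < j`, between which all edges of Seymour's
graph `H` are present; 1-indexed they are
`(1,2),(1,3),(2,3),(2,4),(3,4),(1,5),(3,5),(1,6),(2,6)`. -/
def seymourPairs : List (Fin 6 × Fin 6) :=
  [(0,1), (0,2), (1,2), (1,3), (2,3), (0,4), (2,4), (0,5), (1,5)]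

/-- Seymour's graph `H_n` on the vertex set `{1,…,6} × {1,…,n}` (six blocks of size `n`):
a vertex in block `i` is adjacent to a vertex in block `j` (for `i < j`) iff `(i,j)` is one of
the pairs `(1,2),(1,3),(2,3),(2,4),(3,4),(1,5),(3,5),(1,6),(2,6)`; no edges inside a block. -/
def seymourH (n : ℕ) : SimpleGraph (Fin 6 × Fin n) :=
  SimpleGraph.fromRel (fun x y => (x.1, y.1) ∈ seymourPairs)

instance (n : ℕ) : DecidableRel (seymourH n).Adj := fun x y =>
  decidable_of_iff' _ (SimpleGraph.fromRel_adj _ x y)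

/-!
Blocks 1, 2, 3 form a complete tripartite graph, so colour them 0, 1, 2. Blocks 4, 5, 6 are
independent of each other and each sees exactly two of the first three blocks, so every vertex
in them may take any of three colours (the free one among 0, 1, 2, or 3, or 4) independently:
this gives `3 ^ (3 n) = 27 ^ n` colourings.
-/

namespace SimpleGraph

variable {V α : Type*} [Fintype V] (G : SimpleGraph V)

theorem prod_card_le_card_coloring [Fintype (G.Coloring α)] (L : V → Finset α)
    (hL : ∀ u v, G.Adj u v → Disjoint (L u) (L v)) :
    ∏ v, (L v).card ≤ Fintype.card (G.Coloring α) := by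
  classical
  let colorOf : (∀ v, L v) → G.Coloring α := fun g =>
    Coloring.mk (fun v => g v) fun {u v} huv heq =>
      Finset.disjoint_left.mp (hL u v huv) (g u).2 (heq ▸ (g v).2)
  have colorOf_injective : Function.Injective colorOf := fun g g' h =>
    funext fun v => Subtype.ext (DFunLike.congr_fun h v)
  calc ∏ v, (L v).card = Fintype.card (∀ v, L v) := by simp [Fintype.card_pi]
    _ ≤ _ := Fintype.card_le_of_injective colorOf colorOf_injective

end SimpleGraph

def seymourLists : Fin 6 → Finset (Fin 5) :=
  ![{0}, {1}, {2}, {0, 3, 4}, {1, 3, 4}, {2, 3, 4}]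

theorem seymourLists_disjoint_of_mem_seymourPairs :
    ∀ p ∈ seymourPairs, Disjoint (seymourLists p.1) (seymourLists p.2) := by
  decide

theorem seymourLists_disjoint_of_adj {n : ℕ} {x y : Fin 6 × Fin n} (h : (seymourH n).Adj x y) :
    Disjoint (seymourLists x.1) (seymourLists y.1) := by
  obtain ⟨-, hxy | hyx⟩ := (SimpleGraph.fromRel_adj _ x y).mp h
  · exact seymourLists_disjoint_of_mem_seymourPairs _ hxy
  · exact (seymourLists_disjoint_of_mem_seymourPairs _ hyx).symm

theorem prod_card_seymourLists (n : ℕ) :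
    ∏ x : Fin 6 × Fin n, (seymourLists x.1).card = 27 ^ n := by
  rw [Fintype.prod_prod_type]
  simp only [Finset.prod_const, Finset.card_univ, Fintype.card_fin, Finset.prod_pow]
  rfl

theorem seymourH_card_coloring_five_ge_general (n : ℕ) :
    27 ^ n ≤ Fintype.card ((seymourH n).Coloring (Fin 5)) :=
  prod_card_seymourLists n ▸ (seymourH n).prod_card_le_card_coloring (fun x => seymourLists x.1)
    fun _ _ => seymourLists_disjoint_of_adj

/-- For every `n ≥ 1`, the number of proper 5-colorings of `H_n` is at
least `27^n`. -/
theorem seymourH_card_coloring_five_ge (n : ℕ) (hn : 1 ≤ n) :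
    27 ^ n ≤ Fintype.card ((seymourH n).Coloring (Fin 5)) :=
  seymourH_card_coloring_five_ge_general n
end

section
/- For every natural number n ≥ 1, the graph H_n satisfies P_{H_n}(6) ≤ 1080·72^n + 210·64^n + 360·48^n + 360·36^n + 90·16^n, i.e., the number of proper 6-colorings of H_n is at most this quantity. -/
/-!
A proper colouring uses pairwise disjoint colour sets `S₁, S₂, S₃` on the triangle of blocks
`A₁A₂A₃`, and then `A₄, A₅, A₆` can only use colours outside `S₂ ∪ S₃`, `S₁ ∪ S₃`, `S₁ ∪ S₂`.
Once the triple is fixed, a colouring is a choice of an allowed colour at every vertex, so with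
`a, b, c = |S₁|, |S₂|, |S₃|` the number of `q`-colourings is at most the sum over disjoint
triples of `(a b c (q - b - c) (q - a - c) (q - a - b)) ^ n`. There are
`C(q, a) C(q - a, b) C(q - a - b, c)` triples of given sizes, and for `q = 6` the nonzero weights
are `72, 64, 48, 36, 16`.
-/

open Finset

section BlockColorings

variable {ι κ α : Type*}

theorem card_le_sum_prod_card_pow {β P : Type*} [Fintype β] [Fintype ι] [Fintype κ]
    (f : β → ι × κ → α) (hf : Function.Injective f) (π : β → P) (s : Finset P)
    (hπ : ∀ b, π b ∈ s) (A : P → ι → Finset α) (hA : ∀ b i k, f b (i, k) ∈ A (π b) i) :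
    Fintype.card β ≤ ∑ p ∈ s, ∏ i, #(A p i) ^ Fintype.card κ := by
  classical
  calc Fintype.card β ≤ Fintype.card (Σ p : s, ∀ i, κ → A p i) := by
        refine Fintype.card_le_of_injective
          (fun b => ⟨⟨π b, hπ b⟩, fun i k => ⟨f b (i, k), hA b i k⟩⟩) fun b b' h => hf ?_
        funext ⟨i, k⟩
        exact congrArg (fun x : Σ p : s, ∀ i, κ → A p i => (x.2 i k : α)) h
    _ = ∑ p ∈ s, ∏ i, #(A p i) ^ Fintype.card κ := by
        simp [Fintype.card_sigma, Fintype.card_pi,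
          sum_attach s fun p => ∏ i, #(A p i) ^ Fintype.card κ]

variable [Fintype κ] [DecidableEq α]

def blockColors (f : ι × κ → α) (i : ι) : Finset α :=
  univ.image fun k => f (i, k)

lemma mem_blockColors (f : ι × κ → α) (i : ι) (k : κ) : f (i, k) ∈ blockColors f i :=
  mem_image_of_mem _ (mem_univ k)

variable {G : SimpleGraph (ι × κ)}

lemma SimpleGraph.Coloring.notMem_blockColors (c : G.Coloring α) {i j : ι}
    (hij : ∀ k l, G.Adj (i, k) (j, l)) (k : κ) : c (i, k) ∉ blockColors c j := by
  simp only [blockColors, mem_image, mem_univ, true_and, not_exists]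
  exact fun l h => c.valid (hij k l) h.symm

lemma SimpleGraph.Coloring.disjoint_blockColors (c : G.Coloring α) {i j : ι}
    (hij : ∀ k l, G.Adj (i, k) (j, l)) : Disjoint (blockColors c i) (blockColors c j) := by
  rw [Finset.disjoint_left]
  rintro _ hx
  obtain ⟨k, -, rfl⟩ := mem_image.1 hx
  exact notMem_blockColors c hij k

end BlockColorings

section DisjointTriples

variable (α : Type*) [Fintype α] [DecidableEq α] {M : Type*} [AddCommMonoid M]

def disjointTriples : Finset (Finset α × Finset α × Finset α) :=
  {S | Disjoint S.1 S.2.1 ∧ Disjoint S.1 S.2.2 ∧ Disjoint S.2.1 S.2.2}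

variable {α}

lemma sum_disjoint_apply_card (T : Finset α) (f : ℕ → M) :
    ∑ S with Disjoint T S, f #S =
      ∑ m ∈ range (Fintype.card α - #T + 1), (Fintype.card α - #T).choose m • f m := by
  have : ({S | Disjoint T S} : Finset (Finset α)) = Tᶜ.powerset := by
    ext S
    simp [subset_compl_iff_disjoint_left]
  rw [this, sum_powerset_apply_card, card_compl]

theorem sum_disjointTriples_apply_card (h : ℕ → ℕ → ℕ → M) :
    ∑ S ∈ disjointTriples α, h #S.1 #S.2.1 #S.2.2 =
      ∑ a ∈ range (Fintype.card α + 1), (Fintype.card α).choose a •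
        ∑ b ∈ range (Fintype.card α - a + 1), (Fintype.card α - a).choose b •
          ∑ c ∈ range (Fintype.card α - a - b + 1), (Fintype.card α - a - b).choose c •
            h a b c := by
  set N := Fintype.card α
  calc ∑ S ∈ disjointTriples α, h #S.1 #S.2.1 #S.2.2
      = ∑ S₁, ∑ S₂ with Disjoint S₁ S₂, ∑ S₃ with Disjoint (S₁ ∪ S₂) S₃, h #S₁ #S₂ #S₃ := by
        rw [disjointTriples, sum_filter, Fintype.sum_prod_type]
        refine sum_congr rfl fun S₁ _ => ?_
        rw [Fintype.sum_prod_type, sum_filter]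
        refine sum_congr rfl fun S₂ _ => ?_
        by_cases h₁₂ : Disjoint S₁ S₂ <;> simp [h₁₂, sum_filter, disjoint_union_left]
    _ = ∑ S₁, ∑ S₂ with Disjoint S₁ S₂, ∑ c ∈ range (N - #S₁ - #S₂ + 1),
          (N - #S₁ - #S₂).choose c • h #S₁ #S₂ c := by
        refine sum_congr rfl fun S₁ _ => sum_congr rfl fun S₂ hS₂ => ?_
        rw [sum_disjoint_apply_card, card_union_of_disjoint (mem_filter.1 hS₂).2, Nat.sub_add_eq]
    _ = ∑ S₁ : Finset α, ∑ b ∈ range (N - #S₁ + 1), (N - #S₁).choose b •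
          ∑ c ∈ range (N - #S₁ - b + 1), (N - #S₁ - b).choose c • h #S₁ b c := by
        refine sum_congr rfl fun S₁ _ => ?_
        rw [sum_disjoint_apply_card S₁ fun b => ∑ c ∈ range (N - #S₁ - b + 1),
          (N - #S₁ - b).choose c • h #S₁ b c]
    _ = _ := by
        rw [← powerset_univ, sum_powerset_apply_card (fun a => ∑ b ∈ range (N - a + 1),
          (N - a).choose b • ∑ c ∈ range (N - a - b + 1), (N - a - b).choose c • h a b c),
          card_univ]

end DisjointTriples

def seymourWeight (N a b c : ℕ) : ℕ := a * b * c * (N - (b + c)) * (N - (a + c)) * (N - (a + b))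

lemma sum_choose_smul_seymourWeight_six_pow (n : ℕ) :
    ∑ a ∈ range (6 + 1), Nat.choose 6 a • ∑ b ∈ range (6 - a + 1), (6 - a).choose b •
      ∑ c ∈ range (6 - a - b + 1), (6 - a - b).choose c • seymourWeight 6 a b c ^ n =
      1080 * 72 ^ n + 210 * 64 ^ n + 360 * 48 ^ n + 360 * 36 ^ n + 90 * 16 ^ n + 1996 * 0 ^ n := by
  -- `1996` of the `4 ^ 6` disjoint triples in `Fin 6` have weight `0`
  simp only [sum_range_succ, sum_range_zero, smul_eq_mul, seymourWeight]
  norm_num [Nat.choose]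
  ring

lemma seymourH_adj {n : ℕ} {i j : Fin 6} (h : (i, j) ∈ seymourPairs) (u v : Fin n) :
    (seymourH n).Adj (i, u) (j, v) := by
  have hij : i ≠ j := by revert i j; decide
  exact (SimpleGraph.fromRel_adj _ _ _).2 ⟨fun h' => hij (congrArg Prod.fst h'), Or.inl h⟩

section Seymour

variable {α : Type*} [DecidableEq α] {n : ℕ}

def triangleColors (f : Fin 6 × Fin n → α) : Finset α × Finset α × Finset α :=
  (blockColors f 0, blockColors f 1, blockColors f 2)

lemma notMem_blockColors_of_mem_seymourPairs (c : (seymourH n).Coloring α) {i j : Fin 6}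
    (h : (j, i) ∈ seymourPairs) (u : Fin n) : c (i, u) ∉ blockColors c j :=
  SimpleGraph.Coloring.notMem_blockColors c (fun k l => (seymourH_adj h l k).symm) u

variable [Fintype α]

def seymourAllowedColors (S : Finset α × Finset α × Finset α) : Fin 6 → Finset α :=
  ![S.1, S.2.1, S.2.2, (S.2.1 ∪ S.2.2)ᶜ, (S.1 ∪ S.2.2)ᶜ, (S.1 ∪ S.2.1)ᶜ]

open SimpleGraph.Coloring in
lemma triangleColors_mem_disjointTriples (c : (seymourH n).Coloring α) :
    triangleColors c ∈ disjointTriples α := by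
  simp only [disjointTriples, triangleColors, mem_filter, mem_univ, true_and]
  exact ⟨disjoint_blockColors c (seymourH_adj (by decide)),
    disjoint_blockColors c (seymourH_adj (by decide)),
    disjoint_blockColors c (seymourH_adj (by decide))⟩

lemma mem_seymourAllowedColors_triangleColors (c : (seymourH n).Coloring α) (i : Fin 6)
    (u : Fin n) : c (i, u) ∈ seymourAllowedColors (triangleColors c) i := by
  fin_cases i <;> simp (disch := decide) [seymourAllowedColors, triangleColors, mem_blockColors,
    notMem_blockColors_of_mem_seymourPairs]

lemma prod_card_seymourAllowedColors {S : Finset α × Finset α × Finset α}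
    (hS : S ∈ disjointTriples α) :
    ∏ i, #(seymourAllowedColors S i) = seymourWeight (Fintype.card α) #S.1 #S.2.1 #S.2.2 := by
  obtain ⟨h₁₂, h₁₃, h₂₃⟩ := (mem_filter.1 hS).2
  simp [seymourAllowedColors, Fin.prod_univ_six, seymourWeight, card_compl,
    card_union_of_disjoint, h₁₂, h₁₃, h₂₃, -compl_union]

theorem card_coloring_seymourH_le :
    Fintype.card ((seymourH n).Coloring α) ≤
      ∑ a ∈ range (Fintype.card α + 1), (Fintype.card α).choose a •
        ∑ b ∈ range (Fintype.card α - a + 1), (Fintype.card α - a).choose b •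
          ∑ c ∈ range (Fintype.card α - a - b + 1), (Fintype.card α - a - b).choose c •
            seymourWeight (Fintype.card α) a b c ^ n := by
  calc Fintype.card ((seymourH n).Coloring α)
      ≤ ∑ S ∈ disjointTriples α, ∏ i, #(seymourAllowedColors S i) ^ Fintype.card (Fin n) :=
        card_le_sum_prod_card_pow (β := (seymourH n).Coloring α) _ DFunLike.coe_injective
          (fun c => triangleColors c) _
          triangleColors_mem_disjointTriples _ mem_seymourAllowedColors_triangleColors
    _ = ∑ S ∈ disjointTriples α, seymourWeight (Fintype.card α) #S.1 #S.2.1 #S.2.2 ^ n := by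
        refine sum_congr rfl fun S hS => ?_
        rw [Fintype.card_fin, prod_pow, prod_card_seymourAllowedColors hS]
    _ = _ := sum_disjointTriples_apply_card fun a b c => seymourWeight (Fintype.card α) a b c ^ n

end Seymour

/-- For every `n ≥ 1`, the number of proper 6-colorings of `H_n` is at most
`1080·72^n + 210·64^n + 360·48^n + 360·36^n + 90·16^n`. -/
theorem seymourH_card_coloring_six_le (n : ℕ) (hn : 1 ≤ n) :
    Fintype.card ((seymourH n).Coloring (Fin 6)) ≤
      1080 * 72 ^ n + 210 * 64 ^ n + 360 * 48 ^ n + 360 * 36 ^ n + 90 * 16 ^ n := by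
  have h := card_coloring_seymourH_le (n := n) (α := Fin 6)
  rwa [Fintype.card_fin, sum_choose_smul_seymourWeight_six_pow, zero_pow (by omega), mul_zero,
    add_zero] at h
end

section
/- Let G = (V,E) be a finite simple graph and let q be a natural number. Then the number of proper q-colorings of G equals the Whitney rank expansion: P_G(q) = Σ_{E' ⊆ E} (−1)^{|E'|} · q^{c(E')}, where the sum runs over all subsets E' of the edge set E and c(E') denotes the number of connected components of the spanning subgraph (V, E') (isolated vertices counting as components). -/
/-! A proper `q`-coloring is a map `V → Fin q` under which no edge is monochromatic, so
inclusion–exclusion over the edges gives `P_G(q) = Σ_{E' ⊆ E} (-1)^{|E'|} N(E')`, where `N(E')`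
counts the maps under which every edge of `E'` is monochromatic. These are exactly the maps
constant on the connected components of `(V, E')`, hence `N(E') = q ^ c(E')`. -/

open Finset

namespace SimpleGraph

variable {V α : Type*}

def coloringEquivSubtype (G : SimpleGraph V) :
    G.Coloring α ≃ {f : V → α // ∀ ⦃v w⦄, G.Adj v w → f v ≠ f w} where
  toFun C := ⟨C, fun _ _ h => C.valid h⟩
  invFun f := Coloring.mk f.1 fun h => f.2 h
  left_inv _ := rfl
  right_inv _ := rfl

theorem Reachable.eq_of_forall_adj {G : SimpleGraph V} {f : V → α}
    (hf : ∀ ⦃v w⦄, G.Adj v w → f v = f w) {v w : V} (h : G.Reachable v w) : f v = f w := by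
  obtain ⟨p⟩ := h
  induction p with
  | nil => rfl
  | cons h _ ih => exact (hf h).trans ih

def ConnectedComponent.liftEquiv (G : SimpleGraph V) :
    {f : V → α // ∀ ⦃v w⦄, G.Adj v w → f v = f w} ≃ (G.ConnectedComponent → α) where
  toFun f := Quot.lift f.1 fun _ _ h => h.eq_of_forall_adj f.2
  invFun g := ⟨g ∘ G.connectedComponentMk,
    fun _ _ h => congrArg g (connectedComponentMk_eq_of_adj h)⟩
  left_inv _ := rfl
  right_inv _ := funext fun c => ConnectedComponent.ind (fun _ => rfl) c

theorem card_forall_adj_eq_eq_pow [Finite V] (G : SimpleGraph V) :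
    Nat.card {f : V → α // ∀ ⦃v w⦄, G.Adj v w → f v = f w} =
      Nat.card α ^ Nat.card G.ConnectedComponent := by
  rw [Nat.card_congr (ConnectedComponent.liftEquiv G), Nat.card_fun]

theorem forall_isDiag_map_iff_forall_fromEdgeSet_adj (s : Set (Sym2 V)) (f : V → α) :
    (∀ e ∈ s, (e.map f).IsDiag) ↔ ∀ ⦃v w⦄, (fromEdgeSet s).Adj v w → f v = f w := by
  refine ⟨fun h v w hvw => by simpa using h _ hvw.1, fun h e he => ?_⟩
  induction e using Sym2.ind with
  | h v w =>
    by_cases hvw : v = w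
    · simp [hvw]
    · simpa using h ⟨he, hvw⟩

section Monochromatic

variable [Fintype V] [DecidableEq V] [Fintype α] [DecidableEq α]

variable (α) in
def monochromatic (e : Sym2 V) : Finset (V → α) := {f | (e.map f).IsDiag}

theorem card_coloring_eq_card_inf_compl_monochromatic (G : SimpleGraph V) [Fintype G.edgeSet] :
    Fintype.card (G.Coloring α) = #(G.edgeFinset.inf fun e => (monochromatic α e)ᶜ) := by
  rw [← Nat.card_eq_fintype_card, Nat.card_congr G.coloringEquivSubtype, ← Nat.card_eq_finsetCard]
  refine Nat.card_congr (Equiv.subtypeEquivRight fun f => ?_)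
  simp only [mem_inf, monochromatic, mem_compl, mem_filter, mem_univ, true_and, Sym2.forall,
    mem_edgeFinset, mem_edgeSet, Sym2.map_mk, Sym2.mk_isDiag_iff]

theorem card_inf_monochromatic (s : Finset (Sym2 V)) :
    #(s.inf (monochromatic α)) =
      Fintype.card α ^ Nat.card (fromEdgeSet (s : Set (Sym2 V))).ConnectedComponent := by
  rw [← Nat.card_eq_fintype_card, ← card_forall_adj_eq_eq_pow, ← Nat.card_eq_finsetCard]
  refine Nat.card_congr (Equiv.subtypeEquivRight fun f => ?_)
  simp only [mem_inf, monochromatic, mem_filter, mem_univ, true_and]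
  exact forall_isDiag_map_iff_forall_fromEdgeSet_adj _ f

end Monochromatic

end SimpleGraph

theorem card_coloring_eq_whitney_sum_general
    {V : Type*} [Fintype V] (G : SimpleGraph V) [DecidableRel G.Adj] (q : ℕ) :
    (Fintype.card (G.Coloring (Fin q)) : ℤ) =
      ∑ E' ∈ G.edgeFinset.powerset,
        (-1) ^ E'.card *
          (q : ℤ) ^ Nat.card (SimpleGraph.fromEdgeSet (E' : Set (Sym2 V))).ConnectedComponent := by
  classical
  rw [G.card_coloring_eq_card_inf_compl_monochromatic, inclusion_exclusion_card_inf_compl]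
  refine sum_congr rfl fun E' _ => ?_
  rw [SimpleGraph.card_inf_monochromatic, Fintype.card_fin, Nat.cast_pow]

/-- Whitney's rank expansion of the chromatic polynomial. For a finite simple
graph `G = (V, E)` and a natural number `q`, the number of proper `q`-colorings equals
`Σ_{E' ⊆ E} (-1)^{|E'|} q^{c(E')}`, where `c(E')` is the number of connected components of the
spanning subgraph `(V, E')`. -/
theorem card_coloring_eq_whitney_sum
    {V : Type*} [Fintype V] [DecidableEq V] (G : SimpleGraph V) [DecidableRel G.Adj] (q : ℕ) :
    (Fintype.card (G.Coloring (Fin q)) : ℤ) =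
      ∑ E' ∈ G.edgeFinset.powerset,
        (-1) ^ E'.card *
          (q : ℤ) ^ Nat.card (SimpleGraph.fromEdgeSet (E' : Set (Sym2 V))).ConnectedComponent :=
  card_coloring_eq_whitney_sum_general G q
end

section
/- Let M ≥ 0 be a real number, let β be a complex number with |β| ≤ M, and let q be a real number with q > √2·M + 1. Then |q − 1 − β|² · |q + 1 − β|² ≤ |q − β|⁴. Equivalently, the real quadratic p(x) = (x − a)² + b², where β = a + bi, satisfies p(q−1)·p(q+1) ≤ p(q)². -/
/-! With `w = q - β`, the product `‖w - 1‖² ‖w + 1‖² = ‖w² - 1‖²` equals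
`‖w‖⁴ - 2 (Re w)² + 2 (Im w)² + 1`, so the inequality says `2 (Im w)² + 1 ≤ 2 (Re w)²`.
Writing `β = a + bi` and `r = |β| ≤ M`, this follows from
`(√2 r + 1 - a)² - b² - 1/2 = (r - √2 a)² + 2 (√2 r - a) + 1/2 ≥ 0`. -/

namespace Complex

theorem norm_sub_one_sq_mul_norm_add_one_sq (w : ℂ) :
    ‖w - 1‖ ^ 2 * ‖w + 1‖ ^ 2 = ‖w‖ ^ 4 - 2 * w.re ^ 2 + 2 * w.im ^ 2 + 1 := by
  have h4 : ‖w‖ ^ 4 = (‖w‖ ^ 2) ^ 2 := by ring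
  rw [h4, Complex.sq_norm, Complex.sq_norm, Complex.sq_norm]
  simp only [normSq_apply, sub_re, sub_im, add_re, add_im, one_re, one_im]
  ring

theorem norm_sub_one_sq_mul_norm_add_one_sq_le_iff (w : ℂ) :
    ‖w - 1‖ ^ 2 * ‖w + 1‖ ^ 2 ≤ ‖w‖ ^ 4 ↔ 2 * w.im ^ 2 + 1 ≤ 2 * w.re ^ 2 := by
  rw [norm_sub_one_sq_mul_norm_add_one_sq]
  constructor <;> intro h <;> linarith

theorem two_mul_im_sq_add_one_le_two_mul_sub_re_sq {β : ℂ} {q : ℝ}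
    (hq : Real.sqrt 2 * ‖β‖ + 1 ≤ q) : 2 * β.im ^ 2 + 1 ≤ 2 * (q - β.re) ^ 2 := by
  set r := ‖β‖
  have hnorm : β.re ^ 2 + β.im ^ 2 = r ^ 2 := by
    rw [Complex.sq_norm, normSq_apply]; ring
  have hsqrt : Real.sqrt 2 ^ 2 = 2 := Real.sq_sqrt (by norm_num)
  have hre : β.re ≤ Real.sqrt 2 * r :=
    (re_le_norm β).trans (le_mul_of_one_le_left (norm_nonneg β) Real.one_lt_sqrt_two.le)
  have hbase : 2 * β.im ^ 2 + 1 ≤ 2 * (Real.sqrt 2 * r + 1 - β.re) ^ 2 := by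
    nlinarith [sq_nonneg (r - Real.sqrt 2 * β.re)]
  have hmono : (Real.sqrt 2 * r + 1 - β.re) ^ 2 ≤ (q - β.re) ^ 2 :=
    pow_le_pow_left₀ (by linarith) (by linarith) 2
  linarith

end Complex

theorem quadratic_factor_log_concave_general (M : ℝ) (β : ℂ) (hβ : ‖β‖ ≤ M)
    (q : ℝ) (hq : Real.sqrt 2 * M + 1 < q) :
    ‖(q : ℂ) - 1 - β‖ ^ 2 * ‖(q : ℂ) + 1 - β‖ ^ 2 ≤
      ‖(q : ℂ) - β‖ ^ 4 := by
  have hq' : Real.sqrt 2 * ‖β‖ + 1 ≤ q := by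
    have := mul_le_mul_of_nonneg_left hβ (Real.sqrt_nonneg 2)
    linarith
  rw [sub_right_comm, add_sub_right_comm, Complex.norm_sub_one_sq_mul_norm_add_one_sq_le_iff]
  simpa using Complex.two_mul_im_sq_add_one_le_two_mul_sub_re_sq hq'

/-- If `M ≥ 0`, `β` is a complex number with `|β| ≤ M`, and `q` is a real number
with `q > √2·M + 1`, then `|q - 1 - β|² · |q + 1 - β|² ≤ |q - β|⁴`; equivalently, with
`β = a + bi`, the real quadratic `p(x) = (x - a)² + b²` satisfies `p(q-1)·p(q+1) ≤ p(q)²`. -/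
theorem quadratic_factor_log_concave (M : ℝ) (hM : 0 ≤ M) (β : ℂ) (hβ : ‖β‖ ≤ M)
    (q : ℝ) (hq : Real.sqrt 2 * M + 1 < q) :
    ‖(q : ℂ) - 1 - β‖ ^ 2 * ‖(q : ℂ) + 1 - β‖ ^ 2 ≤
      ‖(q : ℂ) - β‖ ^ 4 :=
  quadratic_factor_log_concave_general M β hβ q hq
end
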